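/- X²₁ (the set of points Σ δₙ ∏_{j≤n} ηⱼ over signed revolving sequences with first nonzero digit 1) is a closed subset of ℂ. -/

import Mathlib

open Complex

/-- e^{iθ} -/
noncomputable def rot (θ : ℝ) : ℂ := Complex.exp (θ * Complex.I)

/-- The digit set Δ_θ = {0, 1, e^{iθ}, …, e^{(p-1)iθ}}. -/
def Delta (θ : ℝ) (p : ℕ) : Set ℂ := insert 0 {z | ∃ k, k < p ∧ z = rot θ ^ k}

/-- Signed Revolving Condition: each nonzero digit equals e^{+iθ} times the previous
nonzero digit if its position j₀ is odd, and e^{-iθ} times it if j₀ is even.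
Sequences are indexed from 1; index 0 is a dummy (digit 0). -/
def SRC (θ : ℝ) (δ : ℕ → ℂ) : Prop :=
  ∀ j k : ℕ, j < k → δ j ≠ 0 → δ k ≠ 0 → (∀ m, j < m → m < k → δ m = 0) →
    δ k = (if Odd j then rot θ else (rot θ)⁻¹) * δ j

/-- Membership in W^±_θ (with the convention δ 0 = 0, i.e. sequences start at index 1). -/
def Wsigned (θ : ℝ) (p : ℕ) (δ : ℕ → ℂ) : Prop :=
  δ 0 = 0 ∧ (∀ n, δ n ∈ Delta θ p) ∧ SRC θ δ

/-- The first nonzero digit of δ is c (or δ is identically zero). -/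
def FirstNonzero (δ : ℕ → ℂ) (c : ℂ) : Prop :=
  (∀ n, δ n = 0) ∨ ∃ j, δ j = c ∧ ∀ m, m < j → δ m = 0

/-- η_j = α for odd j, conj α for even j. -/
noncomputable def eta (α : ℂ) (j : ℕ) : ℂ := if Odd j then α else starRingEnd ℂ α

/-- X²₁ : points from signed revolving sequences with first nonzero digit 1. -/
noncomputable def X2one (α : ℂ) (θ : ℝ) (p : ℕ) : Set ℂ :=
  {x | ∃ δ : ℕ → ℂ, Wsigned θ p δ ∧ FirstNonzero δ 1 ∧
    x = ∑' n, δ n * ∏ j ∈ Finset.Icc 1 n, eta α j}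

/-- X²_{α,θ} : points from all signed revolving sequences. -/
noncomputable def X2full (α : ℂ) (θ : ℝ) (p : ℕ) : Set ℂ :=
  {x | ∃ δ : ℕ → ℂ, Wsigned θ p δ ∧
    x = ∑' n, δ n * ∏ j ∈ Finset.Icc 1 n, eta α j}

/-!
The admissible digit sequences form a closed subset of the compact space `Δ_θ ^ ℕ`: since the
digits range over a finite set, a limit of admissible sequences agrees with one of them on any
given prefix, and the signed revolving condition and the first-digit condition are checked on
finite prefixes. On this compact set the series is continuous by the Weierstrass M-test
(`|ηⱼ| = |α| < 1`), so `X²₁`, its image, is compact and hence closed.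
-/

lemma norm_rot (θ : ℝ) : ‖rot θ‖ = 1 := by
  simp [rot, Complex.norm_exp_ofReal_mul_I]

lemma Delta_finite (θ : ℝ) (p : ℕ) : (Delta θ p).Finite := by
  have : Delta θ p = insert 0 ((rot θ ^ ·) '' Set.Iio p) := by
    ext z; simp [Delta, eq_comm]
  rw [this]
  exact ((Set.finite_Iio p).image _).insert 0

lemma norm_le_one_of_mem_Delta {θ : ℝ} {p : ℕ} {z : ℂ} (hz : z ∈ Delta θ p) : ‖z‖ ≤ 1 := by
  rcases hz with rfl | ⟨k, -, rfl⟩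
  · simp
  · rw [norm_pow, norm_rot, one_pow]

lemma norm_prod_eta (α : ℂ) (n : ℕ) : ‖∏ j ∈ Finset.Icc 1 n, eta α j‖ = ‖α‖ ^ n := by
  have h : ∀ j ∈ Finset.Icc 1 n, ‖eta α j‖ = ‖α‖ := fun j _ => by
    unfold _root_.eta; split_ifs <;> simp
  rw [norm_prod, Finset.prod_congr rfl h, Finset.prod_const, Nat.card_Icc, Nat.add_sub_cancel]

section PrefixClosed

variable {X : Type*} [TopologicalSpace X] [T1Space X] {D : Set X} {s : Set (ℕ → X)}

lemma exists_eq_prefix_of_mem_closure (hD : D.Finite) (hs : ∀ y ∈ s, ∀ n, y n ∈ D)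
    {x : ℕ → X} (hx : x ∈ closure s) (N : ℕ) : ∃ y ∈ s, ∀ m ≤ N, y m = x m := by
  set π : (ℕ → X) → (Fin (N + 1) → X) := fun y m => y m
  have hπ : Continuous π := continuous_pi fun m => continuous_apply (m : ℕ)
  have hfin : (π '' s).Finite :=
    (Set.Finite.pi fun _ => hD).subset <| by
      rintro _ ⟨y, hy, rfl⟩
      exact Set.mem_univ_pi.2 fun m => hs y hy m
  obtain ⟨y, hy, hyx⟩ : π x ∈ π '' s := by
    simpa only [hfin.isClosed.closure_eq] using mem_closure_image hπ.continuousAt hx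
  exact ⟨y, hy, fun m hm => congrFun hyx ⟨m, Nat.lt_succ_of_le hm⟩⟩

lemma isClosed_of_forall_exists_eq_prefix (hD : D.Finite) (hs : ∀ y ∈ s, ∀ n, y n ∈ D)
    (h : ∀ x : ℕ → X, (∀ N, ∃ y ∈ s, ∀ m ≤ N, y m = x m) → x ∈ s) : IsClosed s :=
  closure_subset_iff_isClosed.1 fun x hx => h x (exists_eq_prefix_of_mem_closure hD hs hx)

end PrefixClosed

lemma SRC_of_forall_exists_eq_prefix {θ : ℝ} {δ : ℕ → ℂ}
    (h : ∀ N, ∃ δ', SRC θ δ' ∧ ∀ m ≤ N, δ' m = δ m) : SRC θ δ := by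
  intro j k hjk hj hk hgap
  obtain ⟨δ', hδ', hδ'δ⟩ := h k
  have hj' := hδ'δ j hjk.le
  have hk' := hδ'δ k le_rfl
  rw [← hj'] at hj ⊢
  rw [← hk'] at hk ⊢
  exact hδ' j k hjk hj hk fun m hjm hmk => (hδ'δ m hmk.le).trans (hgap m hjm hmk)

lemma FirstNonzero_of_forall_exists_eq_prefix {δ : ℕ → ℂ} {c : ℂ}
    (h : ∀ N, ∃ δ', FirstNonzero δ' c ∧ ∀ m ≤ N, δ' m = δ m) : FirstNonzero δ c := by
  by_cases hzero : ∀ n, δ n = 0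
  · exact Or.inl hzero
  obtain ⟨n, hn⟩ := not_forall.1 hzero
  obtain ⟨δ', hδ' | ⟨j, hj, hbefore⟩, hδ'δ⟩ := h n
  · exact absurd ((hδ'δ n le_rfl).symm.trans (hδ' n)) hn
  have hjn : j ≤ n := by
    by_contra! hnj
    exact hn ((hδ'δ n le_rfl).symm.trans (hbefore n hnj))
  refine Or.inr ⟨j, (hδ'δ j hjn).symm.trans hj, fun m hmj => ?_⟩
  exact (hδ'δ m (hmj.le.trans hjn)).symm.trans (hbefore m hmj)

def X2oneDigits (θ : ℝ) (p : ℕ) : Set (ℕ → ℂ) :=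
  {δ | Wsigned θ p δ ∧ FirstNonzero δ 1}

lemma isClosed_X2oneDigits (θ : ℝ) (p : ℕ) : IsClosed (X2oneDigits θ p) := by
  refine isClosed_of_forall_exists_eq_prefix (Delta_finite θ p) (fun δ hδ => hδ.1.2.1)
    fun δ h => ?_
  choose δ' hδ' hδ'δ using h
  refine ⟨⟨?_, fun n => ?_, ?_⟩, ?_⟩
  · exact hδ'δ 0 0 le_rfl ▸ (hδ' 0).1.1
  · exact hδ'δ n n le_rfl ▸ (hδ' n).1.2.1 n
  · exact SRC_of_forall_exists_eq_prefix fun N => ⟨δ' N, (hδ' N).1.2.2, hδ'δ N⟩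
  · exact FirstNonzero_of_forall_exists_eq_prefix fun N => ⟨δ' N, (hδ' N).2, hδ'δ N⟩

lemma isCompact_X2oneDigits (θ : ℝ) (p : ℕ) : IsCompact (X2oneDigits θ p) :=
  (isCompact_univ_pi fun _ => (Delta_finite θ p).isCompact).of_isClosed_subset
    (isClosed_X2oneDigits θ p) fun _ hδ => Set.mem_univ_pi.2 hδ.1.2.1

lemma continuousOn_tsum_mul_of_norm_le {R : Type*} [NormedRing R] [CompleteSpace R]
    {w : ℕ → R} (hw : Summable fun n => ‖w n‖) (C : ℝ) :
    ContinuousOn (fun δ : ℕ → R => ∑' n, δ n * w n) {δ | ∀ n, ‖δ n‖ ≤ C} := by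
  refine continuousOn_tsum (u := fun n => C * ‖w n‖)
    (fun n => ((continuous_apply n).mul continuous_const).continuousOn) (hw.mul_left C) ?_
  intro n δ hδ
  exact (norm_mul_le _ _).trans <| mul_le_mul_of_nonneg_right (hδ n) (norm_nonneg _)

lemma X2one_eq_image (α : ℂ) (θ : ℝ) (p : ℕ) :
    X2one α θ p = (fun δ => ∑' n, δ n * ∏ j ∈ Finset.Icc 1 n, eta α j) '' X2oneDigits θ p := by
  ext x
  constructor
  · rintro ⟨δ, hW, hF, rfl⟩; exact ⟨δ, ⟨hW, hF⟩, rfl⟩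
  · rintro ⟨δ, ⟨hW, hF⟩, rfl⟩; exact ⟨δ, hW, hF, rfl⟩

theorem X2one_isClosed_general (α : ℂ) (θ : ℝ) (p : ℕ) (hα : ‖α‖ < 1) :
    IsClosed (X2one α θ p) := by
  have hw : Summable fun n => ‖∏ j ∈ Finset.Icc 1 n, eta α j‖ := by
    simpa only [norm_prod_eta] using summable_geometric_of_lt_one (norm_nonneg α) hα
  have hcont := (continuousOn_tsum_mul_of_norm_le hw 1).mono fun δ (hδ : δ ∈ X2oneDigits θ p) =>
    fun n => norm_le_one_of_mem_Delta (hδ.1.2.1 n)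
  rw [X2one_eq_image]
  exact ((isCompact_X2oneDigits θ p).image_of_continuousOn hcont).isClosed

/-- X²₁ is a closed subset of ℂ. -/
theorem X2one_isClosed (α : ℂ) (θ : ℝ) (p : ℕ) (q : ℤ) (hp : 0 < p)
    (hθ : θ = 2 * Real.pi * (q : ℝ) / (p : ℝ)) (hα : ‖α‖ < 1) :
    IsClosed (X2one α θ p) :=
  X2one_isClosed_general α θ p hα
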